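/- Durfee-square-type identity: Σ_{r≥0} q^r/((q)_r)² = (1/(q)_∞) Σ_{k≥0} q^{k²+k}/((q)_k)², as formal power series in q. -/

import Mathlib

/- Stated coefficientwise: replacing `(q)_∞` by its truncation `(q)_{N+1}` and truncating the
   sums at `r, k ≤ N` does not affect the coefficient of `q^N`, all omitted terms having
   order `> N`. -/

open PowerSeries Finset

/-- `(q)_k = ∏_{i=1}^k (1 - q^i)` in `ℚ[[q]]`. -/
noncomputable def qPoch (k : ℕ) : PowerSeries ℚ :=
  ∏ i ∈ Finset.range k, (1 - (PowerSeries.X : PowerSeries ℚ) ^ (i + 1))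

/-!
Both `(q)_∞² ∑_r q^r / (q)_r²` and `(q)_∞ ∑_k q^(k²+k) / (q)_k²` equal the partial theta series
`∑_j (-1)^j q^(j(j+1)/2)`. In the first, expand `(q)_∞ / (q)_r = (q^(r+1); q)_∞` by Euler's
identity, interchange the two summations and resum the inner one with Euler's expansion of
`1 / (q^(j+1); q)_∞ = (q)_j / (q)_∞`. In the second, expand `(q)_∞ / (q)_k` in the same way and
collect the terms with `k + j = n`: by the `q`-binomial theorem each such block collapses to
`(-1)^n q^(n(n+1)/2)`. All of this happens modulo `q^(N+1)`, where `(q)_∞ ≡ (q)_(N+1)` and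
the infinite sums may be truncated.
-/

section Congruence

variable {R : Type*} [CommRing R]

theorem X_pow_mul_mem_span_X_pow {M n : ℕ} (h : M ≤ n) (a : R⟦X⟧) :
    X ^ n * a ∈ Ideal.span {(X : R⟦X⟧) ^ M} :=
  Ideal.mul_mem_right a _ (Ideal.mem_span_singleton.2 (pow_dvd_pow X h))

theorem coeff_eq_of_smodEq {N : ℕ} {a b : R⟦X⟧}
    (h : a ≡ b [SMOD Ideal.span {(X : R⟦X⟧) ^ (N + 1)}]) : coeff N a = coeff N b := by
  rw [SModEq.sub_mem, Ideal.mem_span_singleton, PowerSeries.X_pow_dvd_iff] at h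
  simpa [sub_eq_zero] using h N N.lt_succ_self

end Congruence

theorem sum_range_sum_range_smodEq_sum_antidiagonal {R M : Type*} [Ring R] [AddCommGroup M]
    [Module R M] {U : Submodule R M} {n : ℕ} (F : ℕ → ℕ → M)
    (hF : ∀ i j, n ≤ i + j → F i j ∈ U) :
    ∑ i ∈ range n, ∑ j ∈ range n, F i j ≡
      ∑ k ∈ range n, ∑ p ∈ antidiagonal k, F p.1 p.2 [SMOD U] := by
  have hsplit : ∀ i ∈ range n,
      ∑ j ∈ range n, F i j ≡ ∑ j ∈ range (n - i), F i j [SMOD U] := by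
    intro i _
    rw [← sum_range_add_sum_Ico _ (Nat.sub_le n i)]
    conv_rhs => rw [← add_zero (∑ j ∈ range (n - i), F i j)]
    refine SModEq.rfl.add ((SModEq.zero).2 (sum_mem fun j hj => hF i j ?_))
    have := (mem_Ico.1 hj).1
    omega
  have hreindex : ∑ i ∈ range n, ∑ j ∈ range (n - i), F i j =
      ∑ k ∈ range n, ∑ p ∈ antidiagonal k, F p.1 p.2 := by
    simp_rw [Nat.sum_antidiagonal_eq_sum_range_succ F, range_eq_Ico]
    rw [← sum_Ico_Ico_comm]
    simp_rw [sum_Ico_eq_sum_range, Nat.add_sub_cancel_left, zero_add, Nat.sub_zero]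
  exact hreindex ▸ SModEq.sum hsplit

theorem qPoch_zero : qPoch 0 = 1 := prod_range_zero _

theorem qPoch_succ (k : ℕ) : qPoch (k + 1) = qPoch k * (1 - X ^ (k + 1)) :=
  prod_range_succ _ _

theorem qPoch_mul_inv (k : ℕ) : qPoch k * (qPoch k)⁻¹ = 1 :=
  PowerSeries.mul_inv_cancel _ (by simp [qPoch])

theorem inv_qPoch_mul (k : ℕ) : (qPoch k)⁻¹ * qPoch k = 1 := by
  rw [mul_comm, qPoch_mul_inv]

theorem one_sub_X_pow_mul_inv_qPoch_succ (k : ℕ) :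
    (1 - X ^ (k + 1)) * (qPoch (k + 1))⁻¹ = (qPoch k)⁻¹ := by
  rw [qPoch_succ, PowerSeries.mul_inv_rev, ← mul_assoc,
    PowerSeries.mul_inv_cancel _ (by simp), one_mul]

theorem qPoch_smodEq {M a : ℕ} (h : M ≤ a) :
    qPoch a ≡ qPoch M [SMOD Ideal.span {(X : ℚ⟦X⟧) ^ M}] := by
  induction a, h using Nat.le_induction with
  | base => rfl
  | succ a hMa ih =>
    refine SModEq.trans ?_ ih
    rw [SModEq.sub_mem, qPoch_succ, show qPoch a * (1 - X ^ (a + 1)) - qPoch a =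
      -(X ^ (a + 1) * qPoch a) by ring]
    exact neg_mem (X_pow_mul_mem_span_X_pow (by omega) _)

theorem Nat.add_one_choose_two (a : ℕ) : (a + 1).choose 2 = a.choose 2 + a := by
  rw [Nat.choose_succ_succ', Nat.choose_one_right, add_comm]

/-- The `j`-th term of Euler's expansion `(q^m; q)_∞ = ∑_j (-1)^j q^(j choose 2 + m j) / (q)_j`. -/
noncomputable def eulerTerm (m j : ℕ) : ℚ⟦X⟧ :=
  (-1) ^ j * X ^ (j.choose 2 + m * j) * (qPoch j)⁻¹

theorem eulerTerm_zero (m : ℕ) : eulerTerm m 0 = 1 := by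
  simp [eulerTerm, qPoch_zero]

theorem X_pow_mul_eulerTerm (m j : ℕ) : X ^ j * eulerTerm m j = eulerTerm (m + 1) j := by
  simp only [eulerTerm, show j.choose 2 + (m + 1) * j = j + (j.choose 2 + m * j) by ring, pow_add]
  ring

theorem one_sub_X_pow_mul_eulerTerm_succ (m j : ℕ) :
    (1 - X ^ (j + 1)) * eulerTerm m (j + 1) = -X ^ m * eulerTerm (m + 1) j := by
  have h := one_sub_X_pow_mul_inv_qPoch_succ j
  simp only [eulerTerm, Nat.add_one_choose_two,
    show j.choose 2 + j + m * (j + 1) = m + (j.choose 2 + (m + 1) * j) by ring, pow_add]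
  linear_combination (-1) ^ (j + 1) * X ^ m * X ^ (j.choose 2 + (m + 1) * j) * h

theorem X_pow_mul_eulerTerm_mem {M a m j : ℕ} (h : M ≤ a + m * j) :
    X ^ a * eulerTerm m j ∈ Ideal.span {(X : ℚ⟦X⟧) ^ M} := by
  rw [eulerTerm, show X ^ a * ((-1) ^ j * X ^ (j.choose 2 + m * j) * (qPoch j)⁻¹) =
    X ^ (a + (j.choose 2 + m * j)) * ((-1) ^ j * (qPoch j)⁻¹) by ring]
  exact X_pow_mul_mem_span_X_pow (by omega) _

noncomputable def qBinomSum (m n : ℕ) : ℚ⟦X⟧ :=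
  ∑ p ∈ antidiagonal n, eulerTerm m p.1 * (qPoch p.2)⁻¹

theorem one_sub_X_pow_mul_qBinomSum_succ (m n : ℕ) :
    (1 - X ^ (n + 1)) * qBinomSum m (n + 1) = (1 - X ^ m) * qBinomSum (m + 1) n := by
  have hsplit : ∀ p ∈ antidiagonal (n + 1),
      (1 - X ^ (n + 1)) * (eulerTerm m p.1 * (qPoch p.2)⁻¹) =
        ((1 - X ^ p.1) * eulerTerm m p.1) * (qPoch p.2)⁻¹ +
          (X ^ p.1 * eulerTerm m p.1) * ((1 - X ^ p.2) * (qPoch p.2)⁻¹) := by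
    intro p hp
    rw [← mem_antidiagonal.1 hp, pow_add]
    ring
  rw [qBinomSum, mul_sum, sum_congr rfl hsplit, sum_add_distrib, Nat.sum_antidiagonal_succ,
    Nat.sum_antidiagonal_succ']
  simp only [pow_zero, sub_self, zero_mul, mul_zero, zero_add, one_sub_X_pow_mul_eulerTerm_succ,
    X_pow_mul_eulerTerm, one_sub_X_pow_mul_inv_qPoch_succ]
  simp only [qBinomSum, mul_assoc, ← mul_sum]
  ring

/-- The `q`-binomial theorem `(z; q)_n = ∑_k [n choose k]_q (-1)^k q^(k choose 2) z^k`
at `z = q^m`. -/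
theorem qPoch_mul_qBinomSum (m n : ℕ) :
    qPoch n * qBinomSum m n = ∏ i ∈ range n, (1 - X ^ (m + i)) := by
  induction n generalizing m with
  | zero => simp [qBinomSum, eulerTerm_zero, qPoch_zero]
  | succ n ih =>
    rw [qPoch_succ, mul_assoc, one_sub_X_pow_mul_qBinomSum_succ, mul_left_comm, ih,
      prod_range_succ']
    simp only [add_zero, add_assoc, add_comm 1]
    ring

theorem qBinomSum_zero (n : ℕ) : qBinomSum 0 n = if n = 0 then 1 else 0 := by
  have h := congrArg ((qPoch n)⁻¹ * ·) (qPoch_mul_qBinomSum 0 n)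
  simp only [← mul_assoc, inv_qPoch_mul, one_mul] at h
  rw [h]
  cases n <;> simp [qPoch_zero, prod_range_succ']

theorem qBinomSum_one (n : ℕ) : qBinomSum 1 n = 1 := by
  have h := congrArg ((qPoch n)⁻¹ * ·) (qPoch_mul_qBinomSum 1 n)
  simp only [← mul_assoc, inv_qPoch_mul, one_mul] at h
  have hprod : ∏ i ∈ range n, (1 - X ^ (1 + i)) = qPoch n := by simp only [qPoch, add_comm 1]
  rw [h, hprod, inv_qPoch_mul]

/-- Truncation of `(q^m; q)_∞`; it agrees with it modulo `q^(R+1)` once `m ≥ 1`. -/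
noncomputable def pochInfPartial (m R : ℕ) : ℚ⟦X⟧ := ∑ j ∈ range (R + 1), eulerTerm m j

/-- Truncation of Euler's expansion `1 / (q^m; q)_∞ = ∑_r q^(m r) / (q)_r`. -/
noncomputable def pochInfInvPartial (m R : ℕ) : ℚ⟦X⟧ :=
  ∑ r ∈ range (R + 1), X ^ (m * r) * (qPoch r)⁻¹

theorem pochInfPartial_eq (m R : ℕ) :
    pochInfPartial m R =
      (1 - X ^ m) * pochInfPartial (m + 1) R + X ^ m * eulerTerm (m + 1) R := by
  have hdiff : pochInfPartial m R - pochInfPartial (m + 1) R =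
      -X ^ m * ∑ j ∈ range R, eulerTerm (m + 1) j := by
    rw [pochInfPartial, pochInfPartial, ← sum_sub_distrib, sum_range_succ', mul_sum]
    simp only [← X_pow_mul_eulerTerm m, ← one_sub_mul, one_sub_X_pow_mul_eulerTerm_succ,
      pow_zero, sub_self, zero_mul, add_zero]
  have hlast : pochInfPartial (m + 1) R = ∑ j ∈ range R, eulerTerm (m + 1) j +
      eulerTerm (m + 1) R := sum_range_succ _ _
  linear_combination hdiff + X ^ m * hlast

theorem pochInfPartial_smodEq_one {M m : ℕ} (h : M ≤ m) (R : ℕ) :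
    pochInfPartial m R ≡ 1 [SMOD Ideal.span {(X : ℚ⟦X⟧) ^ M}] := by
  rw [pochInfPartial, sum_range_succ', eulerTerm_zero, SModEq.sub_mem, add_sub_cancel_right]
  refine sum_mem fun j _ => ?_
  simpa using X_pow_mul_eulerTerm_mem (a := 0) (j := j + 1) (by nlinarith)

theorem qPoch_mul_pochInfPartial_smodEq {M R : ℕ} (hR : M ≤ R + 1) (m : ℕ) :
    qPoch m * pochInfPartial (m + 1) R ≡ qPoch M [SMOD Ideal.span {(X : ℚ⟦X⟧) ^ M}] := by
  have base : ∀ m, M ≤ m → qPoch m * pochInfPartial (m + 1) R ≡ qPoch M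
      [SMOD Ideal.span {(X : ℚ⟦X⟧) ^ M}] := fun m hm => by
    simpa using (qPoch_smodEq hm).mul (pochInfPartial_smodEq_one (hm.trans m.le_succ) R)
  obtain hm | hm := le_or_gt M m
  · exact base m hm
  replace hm := hm.le
  induction hm using Nat.decreasingInduction with
  | self => exact base M le_rfl
  | of_succ k _ ih =>
    have herr : qPoch k * (X ^ (k + 1) * eulerTerm (k + 2) R) ≡ 0
        [SMOD Ideal.span {(X : ℚ⟦X⟧) ^ M}] :=
      SModEq.zero.2 (Ideal.mul_mem_left _ _ (X_pow_mul_eulerTerm_mem (by nlinarith)))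
    rw [pochInfPartial_eq, mul_add, ← mul_assoc, ← qPoch_succ]
    simpa using ih.add herr

theorem qPoch_mul_inv_qPoch_smodEq {M R : ℕ} (hR : M ≤ R + 1) (m : ℕ) :
    qPoch M * (qPoch m)⁻¹ ≡ pochInfPartial (m + 1) R [SMOD Ideal.span {(X : ℚ⟦X⟧) ^ M}] := by
  have h := (qPoch_mul_pochInfPartial_smodEq hR m).symm.mul (SModEq.refl (qPoch m)⁻¹)
  rwa [mul_right_comm, qPoch_mul_inv, one_mul] at h

/-- The Cauchy product has `q^((m+1) n)`-coefficient `qBinomSum 0 n`, which vanishes for `n > 0`. -/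
theorem pochInfPartial_mul_pochInfInvPartial_smodEq_one {M R : ℕ} (hR : M ≤ R + 1) (m : ℕ) :
    pochInfPartial (m + 1) R * pochInfInvPartial (m + 1) R ≡ 1
      [SMOD Ideal.span {(X : ℚ⟦X⟧) ^ M}] := by
  set F : ℕ → ℕ → ℚ⟦X⟧ := fun j r => X ^ ((m + 1) * (j + r)) * (eulerTerm 0 j * (qPoch r)⁻¹)
  have hprod : pochInfPartial (m + 1) R * pochInfInvPartial (m + 1) R =
      ∑ j ∈ range (R + 1), ∑ r ∈ range (R + 1), F j r := by
    rw [pochInfPartial, pochInfInvPartial, sum_mul_sum]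
    refine sum_congr rfl fun j _ => sum_congr rfl fun r _ => ?_
    simp only [F, eulerTerm, mul_add, pow_add]
    ring
  have hdiag : ∀ n, ∑ p ∈ antidiagonal n, F p.1 p.2 = X ^ ((m + 1) * n) * qBinomSum 0 n := by
    intro n
    rw [qBinomSum, mul_sum]
    exact sum_congr rfl fun p hp => by simp only [F]; rw [mem_antidiagonal.1 hp]
  rw [hprod]
  refine (sum_range_sum_range_smodEq_sum_antidiagonal F fun j r h =>
    X_pow_mul_mem_span_X_pow (by nlinarith) _).trans ?_
  simp [hdiag, qBinomSum_zero]

theorem qPoch_mul_pochInfInvPartial_smodEq {M R : ℕ} (hR : M ≤ R + 1) (m : ℕ) :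
    qPoch M * pochInfInvPartial (m + 1) R ≡ qPoch m [SMOD Ideal.span {(X : ℚ⟦X⟧) ^ M}] := by
  have h := (qPoch_mul_pochInfPartial_smodEq hR m).symm.mul
    (SModEq.refl (pochInfInvPartial (m + 1) R))
  refine h.trans ?_
  simpa [mul_assoc] using
    (SModEq.refl (qPoch m)).mul (pochInfPartial_mul_pochInfInvPartial_smodEq_one hR m)

noncomputable def partialTheta (n : ℕ) : ℚ⟦X⟧ :=
  ∑ j ∈ range n, (-1) ^ j * X ^ ((j + 1).choose 2)

theorem qPoch_sq_mul_sum_smodEq_partialTheta (N : ℕ) :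
    qPoch (N + 1) ^ 2 * ∑ r ∈ range (N + 1), X ^ r * ((qPoch r)⁻¹) ^ 2 ≡
      partialTheta (N + 1) [SMOD Ideal.span {(X : ℚ⟦X⟧) ^ (N + 1)}] := by
  set P := qPoch (N + 1)
  calc P ^ 2 * ∑ r ∈ range (N + 1), X ^ r * ((qPoch r)⁻¹) ^ 2
      = ∑ r ∈ range (N + 1), X ^ r * (qPoch r)⁻¹ * P * (P * (qPoch r)⁻¹) := by
        rw [mul_sum]
        exact sum_congr rfl fun r _ => by ring
    _ ≡ ∑ r ∈ range (N + 1), X ^ r * (qPoch r)⁻¹ * P * pochInfPartial (r + 1) N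
        [SMOD Ideal.span {(X : ℚ⟦X⟧) ^ (N + 1)}] :=
        SModEq.sum fun r _ => SModEq.rfl.mul (qPoch_mul_inv_qPoch_smodEq le_rfl r)
    _ = ∑ j ∈ range (N + 1),
          (-1) ^ j * X ^ ((j + 1).choose 2) * (qPoch j)⁻¹ * (P * pochInfInvPartial (j + 1) N) := by
        simp only [pochInfPartial, pochInfInvPartial, mul_sum]
        rw [sum_comm]
        refine sum_congr rfl fun j _ => sum_congr rfl fun r _ => ?_
        simp only [eulerTerm, Nat.add_one_choose_two]
        ring
    _ ≡ ∑ j ∈ range (N + 1), (-1) ^ j * X ^ ((j + 1).choose 2) * (qPoch j)⁻¹ * qPoch j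
        [SMOD Ideal.span {(X : ℚ⟦X⟧) ^ (N + 1)}] :=
        SModEq.sum fun j _ => SModEq.rfl.mul (qPoch_mul_pochInfInvPartial_smodEq le_rfl j)
    _ = partialTheta (N + 1) := by
        simp only [partialTheta, mul_assoc, inv_qPoch_mul, mul_one]

theorem qPoch_mul_sum_smodEq_partialTheta (N : ℕ) :
    qPoch (N + 1) * ∑ k ∈ range (N + 1), X ^ (k ^ 2 + k) * ((qPoch k)⁻¹) ^ 2 ≡
      partialTheta (N + 1) [SMOD Ideal.span {(X : ℚ⟦X⟧) ^ (N + 1)}] := by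
  set P := qPoch (N + 1)
  set F : ℕ → ℕ → ℚ⟦X⟧ := fun k j => (qPoch k)⁻¹ * (X ^ (k ^ 2 + k) * eulerTerm (k + 1) j)
  have hdiag : ∀ n, ∑ p ∈ antidiagonal n, F p.1 p.2 =
      (-1) ^ n * X ^ ((n + 1).choose 2) * qBinomSum 1 n := by
    intro n
    rw [qBinomSum, mul_sum]
    refine sum_congr rfl fun ⟨k, j⟩ hp => ?_
    obtain rfl : k + j = n := mem_antidiagonal.1 hp
    have hexp : k ^ 2 + k + (j.choose 2 + (k + 1) * j) =
        (k + j + 1).choose 2 + (k.choose 2 + k) := by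
      qify [Nat.cast_choose_two]
      ring
    have hsign : ((-1 : ℚ⟦X⟧) ^ k) ^ 2 = 1 := by
      rw [← pow_mul, mul_comm, pow_mul, neg_one_sq, one_pow]
    have hX : (X : ℚ⟦X⟧) ^ (k ^ 2 + k) * X ^ (j.choose 2 + (k + 1) * j) =
        X ^ ((k + j + 1).choose 2) * X ^ (k.choose 2 + k) := by
      rw [← pow_add, ← pow_add, hexp]
    simp only [F, eulerTerm, one_mul]
    linear_combination (-1) ^ j * (qPoch k)⁻¹ * (qPoch j)⁻¹ * hX - (-1) ^ j *
      X ^ ((k + j + 1).choose 2) * X ^ (k.choose 2 + k) * (qPoch k)⁻¹ * (qPoch j)⁻¹ * hsign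
  calc P * ∑ k ∈ range (N + 1), X ^ (k ^ 2 + k) * ((qPoch k)⁻¹) ^ 2
      = ∑ k ∈ range (N + 1), X ^ (k ^ 2 + k) * (qPoch k)⁻¹ * (P * (qPoch k)⁻¹) := by
        rw [mul_sum]
        exact sum_congr rfl fun k _ => by ring
    _ ≡ ∑ k ∈ range (N + 1), X ^ (k ^ 2 + k) * (qPoch k)⁻¹ * pochInfPartial (k + 1) N
        [SMOD Ideal.span {(X : ℚ⟦X⟧) ^ (N + 1)}] :=
        SModEq.sum fun k _ => SModEq.rfl.mul (qPoch_mul_inv_qPoch_smodEq le_rfl k)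
    _ = ∑ k ∈ range (N + 1), ∑ j ∈ range (N + 1), F k j := by
        simp only [F, pochInfPartial, mul_sum]
        exact sum_congr rfl fun k _ => sum_congr rfl fun j _ => by ring
    _ ≡ ∑ n ∈ range (N + 1), ∑ p ∈ antidiagonal n, F p.1 p.2
        [SMOD Ideal.span {(X : ℚ⟦X⟧) ^ (N + 1)}] :=
        sum_range_sum_range_smodEq_sum_antidiagonal F fun k j h =>
          Ideal.mul_mem_left _ _ (X_pow_mul_eulerTerm_mem (by nlinarith))
    _ = partialTheta (N + 1) := by
        simp only [hdiag, qBinomSum_one, mul_one, partialTheta]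

theorem durfee_type_identity (N : ℕ) :
    PowerSeries.coeff (R := ℚ) N
      (∑ r ∈ Finset.range (N + 1),
        (PowerSeries.X : PowerSeries ℚ) ^ r * ((qPoch r)⁻¹) ^ 2)
    =
    PowerSeries.coeff (R := ℚ) N
      ((qPoch (N + 1))⁻¹ *
        ∑ k ∈ Finset.range (N + 1),
          (PowerSeries.X : PowerSeries ℚ) ^ (k ^ 2 + k) * ((qPoch k)⁻¹) ^ 2) := by
  set P := qPoch (N + 1)
  set L := ∑ r ∈ range (N + 1), (X : ℚ⟦X⟧) ^ r * ((qPoch r)⁻¹) ^ 2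
  set S := ∑ k ∈ range (N + 1), (X : ℚ⟦X⟧) ^ (k ^ 2 + k) * ((qPoch k)⁻¹) ^ 2
  have h : P ^ 2 * L ≡ P * S [SMOD Ideal.span {(X : ℚ⟦X⟧) ^ (N + 1)}] :=
    (qPoch_sq_mul_sum_smodEq_partialTheta N).trans
      (qPoch_mul_sum_smodEq_partialTheta N).symm
  have hP : P⁻¹ * P = 1 := inv_qPoch_mul (N + 1)
  refine coeff_eq_of_smodEq ?_
  calc L = P⁻¹ ^ 2 * (P ^ 2 * L) := by linear_combination (-(P⁻¹ * P) - 1) * L * hP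
    _ ≡ P⁻¹ ^ 2 * (P * S) [SMOD Ideal.span {(X : ℚ⟦X⟧) ^ (N + 1)}] := SModEq.rfl.mul h
    _ = P⁻¹ * S := by linear_combination P⁻¹ * S * hP
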